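/- arXiv:2002.00720 — 4 statements merged into one kernel-verified Lean document; each statement's English description precedes it below -/
import Mathlib

section
/- There is at most one homomorphism between two models. That is, if M and M' are models (Feature Structures with Wrappings together with assignment functions) over the same signature, both satisfying the reachability constraint, and h and h' are homomorphisms from M to M', then h = h' (i.e. h_V = h'_V and h_W = h'_W). -/
/-- A signature for Feature Structures with Wrappings: finite sets of types,
attributes and relations (with arities `m > 1`), together with base-labels
(node names), node variables and wrapping variables. -/
structure Signature where
  TYPE : Type
  ATTR : Type
  REL : Type
  arity : REL → ℕ
  NNAME : Type
  NVAR : Type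
  WVAR : Type
  finTYPE : Finite TYPE
  finATTR : Finite ATTR
  finREL : Finite REL
  arity_gt_one : ∀ r, 1 < arity r

/-- A model: a Feature Structure with Wrappings `F = ⟨V, 𝒲, I⟩` together with an
assignment `g = ⟨g_N, g_W⟩`.  `V` is a nonempty set of nodes, `Wr` (`𝒲`) is a set of
pairwise disjoint nonempty subsets of `V` (the wrappings), `I` interprets types as
node sets, attributes as partial functions `V ⇀ V`, `m`-ary relations as sets of
`m`-tuples of nodes, and base-labels as (at most one) nodes; `g_N : NVAR ⇀ V` and
`g_W : WVAR ⇀ 𝒲` are partial assignment functions. -/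
structure Model (S : Signature) where
  V : Type
  v_nonempty : Nonempty V
  Wr : Set (Set V)
  wr_nonempty : ∀ W ∈ Wr, W.Nonempty
  wr_disjoint : ∀ W ∈ Wr, ∀ X ∈ Wr, W ≠ X → W ∩ X = ∅
  itype : S.TYPE → Set V
  iattr : S.ATTR → V → Option V
  irel : (r : S.REL) → Set (Fin (S.arity r) → V)
  iname : S.NNAME → Option V
  gN : S.NVAR → Option V
  gW : S.WVAR → Option (Set V)
  gW_mem : ∀ x W, gW x = some W → W ∈ Wr

namespace Model

variable {S : Signature}

/-- The wrappings of a model, as a type. -/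
def Wrp (M : Model S) : Type := {W : Set M.V // W ∈ M.Wr}

/-- Application of a path of attributes to a node (a partial function). -/
def pathApply (M : Model S) : List S.ATTR → M.V → Option M.V
  | [], v => some v
  | a :: p, v => (M.iattr a v).bind (M.pathApply p)

/-- `u` and `v` lie in the same w-set (the w-sets are the elements of the
partition `𝒲 ∪ {V \ ⋃𝒲}`). -/
def sameW (M : Model S) (u v : M.V) : Prop :=
  (∃ W ∈ M.Wr, u ∈ W ∧ v ∈ W) ∨ (u ∉ ⋃₀ M.Wr ∧ v ∉ ⋃₀ M.Wr)

/-- The reachability constraint: every node is attribute-accessible from a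
base-labelled or variable-assigned node lying in the same w-set. -/
def Reach (M : Model S) : Prop :=
  ∀ v : M.V, ∃ (u : M.V) (p : List S.ATTR),
    ((∃ b, M.iname b = some u) ∨ (∃ x, M.gN x = some u)) ∧
    M.sameW u v ∧ M.pathApply p u = some v

end Model

/-- A homomorphism `h = ⟨h_V, h_W⟩` of models, with `h_V : V → V' ⊎ 𝒲'` and
`h_W : 𝒲 → 𝒲'`, preserving types, attributes, relations, base-labels, wrapping
membership and assignments.  (Preservation statements of the form
`h_V(I(p)(v)) = I'(p)(h_V(v))` force the relevant values of `h_V` to be nodes,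
since attributes, types, relations, base-labels and node-variable assignments
only concern nodes.) -/
structure Hom {S : Signature} (M M' : Model S) where
  hV : M.V → M'.V ⊕ M'.Wrp
  hW : M.Wrp → M'.Wrp
  map_type : ∀ t v, v ∈ M.itype t → ∃ u, hV v = Sum.inl u ∧ u ∈ M'.itype t
  map_attr : ∀ a v v', M.iattr a v = some v' →
    ∃ u u', hV v = Sum.inl u ∧ hV v' = Sum.inl u' ∧ M'.iattr a u = some u'
  map_rel : ∀ r f, f ∈ M.irel r →
    ∃ f', (∀ i, hV (f i) = Sum.inl (f' i)) ∧ f' ∈ M'.irel r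
  map_name : ∀ b v, M.iname b = some v → ∃ u, M'.iname b = some u ∧ hV v = Sum.inl u
  map_wr : ∀ (W : M.Wrp), ∀ v ∈ W.val, ∃ u, hV v = Sum.inl u ∧ u ∈ (hW W).val
  map_gN : ∀ x v, M.gN x = some v → ∃ u, M'.gN x = some u ∧ hV v = Sum.inl u
  map_gW : ∀ x W, (h : M.gW x = some W) → M'.gW x = some (hW ⟨W, M.gW_mem x W h⟩).val

/-- `M` subsumes `M'` (written `M ⊑ M'`) if there is a homomorphism from `M` to `M'`. -/
def Subsumes {S : Signature} (M M' : Model S) : Prop := Nonempty (Hom M M')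

/-- The extension of the node map of a homomorphism to wrappings (via `h_W`). -/
def Hom.ext {S : Signature} {M M' : Model S} (h : Hom M M') :
    M.V ⊕ M.Wrp → M'.V ⊕ M'.Wrp :=
  Sum.elim h.hV (fun W => Sum.inr (h.hW W))

/-!
Reachability determines a homomorphism: both homomorphisms are forced to agree on labelled
and variable-assigned nodes, and attribute preservation propagates agreement along attribute
paths, which by reachability cover every node.  A wrapping `W` is then sent by both to
wrappings containing the common image of a node of `W`; as the wrappings of the target are
disjoint, the two images coincide.
-/

namespace Model

variable {S : Signature} {M : Model S}

theorem Wrp.eq_of_mem_of_mem {W X : M.Wrp} {v : M.V} (hW : v ∈ W.val) (hX : v ∈ X.val) :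
    W = X := by
  by_contra hne
  have hdisj := M.wr_disjoint W.val W.property X.val X.property (mt Subtype.ext hne)
  exact (Set.eq_empty_iff_forall_notMem.mp hdisj) v ⟨hW, hX⟩

end Model

namespace Hom

variable {S : Signature} {M M' : Model S} (h h' : Hom M M')

theorem hV_eq_of_iname {b : S.NNAME} {v : M.V} (hb : M.iname b = some v) :
    h.hV v = h'.hV v := by
  obtain ⟨u, hu, hv⟩ := h.map_name b v hb
  obtain ⟨u', hu', hv'⟩ := h'.map_name b v hb
  rw [hv, hv', Option.some.inj (hu.symm.trans hu')]

theorem hV_eq_of_gN {x : S.NVAR} {v : M.V} (hx : M.gN x = some v) :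
    h.hV v = h'.hV v := by
  obtain ⟨u, hu, hv⟩ := h.map_gN x v hx
  obtain ⟨u', hu', hv'⟩ := h'.map_gN x v hx
  rw [hv, hv', Option.some.inj (hu.symm.trans hu')]

theorem hV_eq_of_iattr {a : S.ATTR} {v w : M.V} (hw : M.iattr a v = some w)
    (hv : h.hV v = h'.hV v) : h.hV w = h'.hV w := by
  obtain ⟨u, uw, hu, huw, hau⟩ := h.map_attr a v w hw
  obtain ⟨u', uw', hu', huw', hau'⟩ := h'.map_attr a v w hw
  have hsrc : u = u' := Sum.inl.inj (hu.symm.trans (hv.trans hu'))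
  subst hsrc
  rw [huw, huw', Option.some.inj (hau.symm.trans hau')]

theorem hV_eq_of_pathApply {p : List S.ATTR} {v w : M.V} (hp : M.pathApply p v = some w)
    (hv : h.hV v = h'.hV v) : h.hV w = h'.hV w := by
  induction p generalizing v with
  | nil =>
    cases hp
    exact hv
  | cons a p ih =>
    obtain ⟨u, hu, hpu⟩ := Option.bind_eq_some_iff.mp hp
    exact ih hpu (h.hV_eq_of_iattr h' hu hv)

theorem hV_eq_of_reach (hM : M.Reach) : h.hV = h'.hV := by
  funext v
  obtain ⟨u, p, hlabel, -, hp⟩ := hM v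
  refine h.hV_eq_of_pathApply h' hp ?_
  rcases hlabel with ⟨b, hb⟩ | ⟨x, hx⟩
  · exact h.hV_eq_of_iname h' hb
  · exact h.hV_eq_of_gN h' hx

theorem hW_eq_of_hV_eq (hV : h.hV = h'.hV) : h.hW = h'.hW := by
  funext W
  obtain ⟨v, hv⟩ := M.wr_nonempty W.val W.property
  obtain ⟨u, hu, huW⟩ := h.map_wr W v hv
  obtain ⟨u', hu', huW'⟩ := h'.map_wr W v hv
  have hsame : u = u' := Sum.inl.inj (hu.symm.trans ((congrFun hV v).trans hu'))
  subst hsame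
  exact Model.Wrp.eq_of_mem_of_mem huW huW'

end Hom

theorem hom_unique_general {S : Signature} {M M' : Model S}
    (hM : M.Reach) (h h' : Hom M M') :
    h.hV = h'.hV ∧ h.hW = h'.hW := by
  have hV := h.hV_eq_of_reach h' hM
  exact ⟨hV, h.hW_eq_of_hV_eq h' hV⟩

/-- There is at most one homomorphism between two models: if `M` and
`M'` are models over the same signature, both satisfying the reachability constraint,
and `h, h'` are homomorphisms from `M` to `M'`, then `h = h'`
(i.e. `h_V = h'_V` and `h_W = h'_W`). -/
theorem hom_unique {S : Signature} {M M' : Model S}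
    (hM : M.Reach) (hM' : M'.Reach) (h h' : Hom M M') :
    h.hV = h'.hV ∧ h.hW = h'.hW :=
  hom_unique_general hM h h'
end

section
/- If there exist homomorphisms h : M → M' and h' : M' → M between two models (both satisfying the reachability constraint), then h_V maps every node of M to a node (not to a wrapping) of M', i.e. the codomain of h_V is contained in V'. -/
/-! By reachability every node of `M` is reached along an attribute path from a
base-labelled or variable-assigned node. A homomorphism sends such a node to a node, and it
preserves attributes, which only connect nodes, so every node on the path is also sent to
a node. -/

namespace Hom

variable {S : Signature} {M M' : Model S} (h : Hom M M')

theorem exists_inl_of_pathApply {p : List S.ATTR} {u v : M.V}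
    (hp : M.pathApply p u = some v) (hu : ∃ w, h.hV u = Sum.inl w) :
    ∃ w, h.hV v = Sum.inl w := by
  induction p generalizing u with
  | nil =>
    obtain rfl : u = v := Option.some.inj hp
    exact hu
  | cons a p ih =>
    obtain ⟨m, hm, hrest⟩ := Option.bind_eq_some_iff.mp hp
    obtain ⟨-, w, -, hw, -⟩ := h.map_attr a u m hm
    exact ih hrest ⟨w, hw⟩

theorem exists_inl_of_labelled {u : M.V}
    (hu : (∃ b, M.iname b = some u) ∨ (∃ x, M.gN x = some u)) :
    ∃ w, h.hV u = Sum.inl w := by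
  rcases hu with ⟨b, hb⟩ | ⟨x, hx⟩
  · obtain ⟨w, -, hw⟩ := h.map_name b u hb
    exact ⟨w, hw⟩
  · obtain ⟨w, -, hw⟩ := h.map_gN x u hx
    exact ⟨w, hw⟩

end Hom

theorem hom_nodes_to_nodes_general {S : Signature} {M M' : Model S}
    (hM : M.Reach) (h : Hom M M') :
    ∀ v : M.V, ∃ u : M'.V, h.hV v = Sum.inl u := by
  intro v
  obtain ⟨u, p, hlabel, -, hpath⟩ := hM v
  exact h.exists_inl_of_pathApply hpath (h.exists_inl_of_labelled hlabel)

/-- If there exist homomorphisms `h : M → M'` and `h' : M' → M`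
between two models (both satisfying the reachability constraint), then `h_V` maps
every node of `M` to a node (not to a wrapping) of `M'`, i.e. the codomain of `h_V`
is contained in `V'`. -/
theorem hom_nodes_to_nodes {S : Signature} {M M' : Model S}
    (hM : M.Reach) (hM' : M'.Reach) (h : Hom M M') (h' : Hom M' M) :
    ∀ v : M.V, ∃ u : M'.V, h.hV v = Sum.inl u :=
  hom_nodes_to_nodes_general hM h
end

section
/- Mutual subsumption is equivalent to isomorphism: two models M and M' (both satisfying the reachability constraint) satisfy M ⊑ M' and M' ⊑ M if and only if M and M' are isomorphic. In particular, if h : M → M' and h' : M' → M are homomorphisms, then h is an isomorphism with inverse h'. -/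
/-- `τ` is an inverse of the homomorphism `σ`: `σ_V` takes values in nodes only,
the (corestricted) node maps and the wrapping maps are mutually inverse bijections.
(Since `τ` is itself a homomorphism, this says exactly that `σ` is an isomorphism
with inverse `τ`.) -/
def Hom.IsInverse {S : Signature} {M M' : Model S} (σ : Hom M M') (τ : Hom M' M) : Prop :=
  (∀ v : M.V, ∃ u : M'.V, σ.hV v = Sum.inl u ∧ τ.hV u = Sum.inl v) ∧
  (∀ u : M'.V, ∃ v : M.V, τ.hV u = Sum.inl v ∧ σ.hV v = Sum.inl u) ∧
  (∀ W : M.Wrp, τ.hW (σ.hW W) = W) ∧ (∀ W : M'.Wrp, σ.hW (τ.hW W) = W)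

/-- A homomorphism `σ : M → M'` is an isomorphism if `σ_V` takes values in `V'` only,
`σ_V` and `σ_W` are bijections, and the inverse is a homomorphism `M' → M`. -/
def Hom.IsIso {S : Signature} {M M' : Model S} (σ : Hom M M') : Prop :=
  ∃ τ : Hom M' M, σ.IsInverse τ

/-- Two models are isomorphic if there is an isomorphism between them. -/
def Isomorphic {S : Signature} (M M' : Model S) : Prop :=
  ∃ σ : Hom M M', σ.IsIso

/-!
Compose the two homomorphisms. The composite fixes every labelled or variable-assigned node,
since labels and variables are preserved in both directions and name at most one node. It
then fixes every node reachable from those by attributes: attributes are partial functions,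
so the image of `I(a)(u)` is forced to be `I(a)` of the image of `u`. By the reachability
constraint this is every node. A wrapping `W` is then mapped back to a wrapping that shares
a node with `W`, hence equals `W` by disjointness.
-/

namespace Model

variable {S : Signature}

theorem eq_of_mem_of_mem_wr (M : Model S) {W X : Set M.V} (hW : W ∈ M.Wr) (hX : X ∈ M.Wr)
    {v : M.V} (hvW : v ∈ W) (hvX : v ∈ X) : W = X := by
  by_contra hne
  have hvWX : v ∈ W ∩ X := ⟨hvW, hvX⟩
  rw [M.wr_disjoint W hW X hX hne] at hvWX
  exact hvWX

end Model

namespace Hom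

variable {S : Signature} {M M' : Model S} (h : Hom M M') (h' : Hom M' M)

def CompFixes (v : M.V) : Prop :=
  ∃ w, h.hV v = Sum.inl w ∧ h'.hV w = Sum.inl v

theorem compFixes_of_iname {b : S.NNAME} {u : M.V} (hb : M.iname b = some u) :
    h.CompFixes h' u := by
  obtain ⟨w, hw, hu⟩ := h.map_name b u hb
  obtain ⟨u', hu', hw'⟩ := h'.map_name b w hw
  obtain rfl : u' = u := Option.some.inj (hu'.symm.trans hb)
  exact ⟨w, hu, hw'⟩

theorem compFixes_of_gN {x : S.NVAR} {u : M.V} (hx : M.gN x = some u) :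
    h.CompFixes h' u := by
  obtain ⟨w, hw, hu⟩ := h.map_gN x u hx
  obtain ⟨u', hu', hw'⟩ := h'.map_gN x w hw
  obtain rfl : u' = u := Option.some.inj (hu'.symm.trans hx)
  exact ⟨w, hu, hw'⟩

theorem CompFixes.iattr {a : S.ATTR} {u v : M.V} (hu : h.CompFixes h' u)
    (ha : M.iattr a u = some v) : h.CompFixes h' v := by
  obtain ⟨w, huw, hwu⟩ := hu
  obtain ⟨w₀, w₁, huw₀, hvw₁, hw₀w₁⟩ := h.map_attr a u v ha
  obtain rfl : w₀ = w := Sum.inl.inj (huw₀.symm.trans huw)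
  obtain ⟨u₀, v₀, hwu₀, hw₁v₀, hu₀v₀⟩ := h'.map_attr a w₀ w₁ hw₀w₁
  obtain rfl : u₀ = u := Sum.inl.inj (hwu₀.symm.trans hwu)
  obtain rfl : v₀ = v := Option.some.inj (hu₀v₀.symm.trans ha)
  exact ⟨w₁, hvw₁, hw₁v₀⟩

theorem CompFixes.pathApply {p : List S.ATTR} {u v : M.V} (hu : h.CompFixes h' u)
    (hp : M.pathApply p u = some v) : h.CompFixes h' v := by
  induction p generalizing u with
  | nil =>
    obtain rfl : u = v := Option.some.inj hp
    exact hu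
  | cons a p ih =>
    obtain ⟨u₁, ha, hp⟩ := Option.bind_eq_some_iff.mp hp
    exact ih (hu.iattr h h' ha) hp

theorem compFixes_of_reach (hM : M.Reach) (v : M.V) : h.CompFixes h' v := by
  obtain ⟨u, p, hlabel, -, hp⟩ := hM v
  refine CompFixes.pathApply h h' ?_ hp
  rcases hlabel with ⟨b, hb⟩ | ⟨x, hx⟩
  · exact h.compFixes_of_iname h' hb
  · exact h.compFixes_of_gN h' hx

theorem hW_hW_eq_of_compFixes {W : M.Wrp} {v : M.V} (hvW : v ∈ W.val)
    (hv : h.CompFixes h' v) : h'.hW (h.hW W) = W := by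
  obtain ⟨w, hvw, hwv⟩ := hv
  obtain ⟨w₀, hvw₀, hw₀W⟩ := h.map_wr W v hvW
  obtain rfl : w₀ = w := Sum.inl.inj (hvw₀.symm.trans hvw)
  obtain ⟨v₀, hwv₀, hv₀W⟩ := h'.map_wr (h.hW W) w₀ hw₀W
  obtain rfl : v₀ = v := Sum.inl.inj (hwv₀.symm.trans hwv)
  exact Subtype.ext (M.eq_of_mem_of_mem_wr (h'.hW (h.hW W)).property W.property hv₀W hvW)

theorem hW_hW_eq_of_reach (hM : M.Reach) (W : M.Wrp) : h'.hW (h.hW W) = W := by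
  obtain ⟨v, hvW⟩ := M.wr_nonempty W.val W.property
  exact h.hW_hW_eq_of_compFixes h' hvW (h.compFixes_of_reach h' hM v)

theorem isInverse_of_reach (hM : M.Reach) (hM' : M'.Reach) : h.IsInverse h' :=
  ⟨h.compFixes_of_reach h' hM, h'.compFixes_of_reach h hM',
    h.hW_hW_eq_of_reach h' hM, h'.hW_hW_eq_of_reach h hM'⟩

end Hom

/-- Mutual subsumption is equivalent to isomorphism: two models `M`
and `M'` (both satisfying the reachability constraint) satisfy `M ⊑ M'` and `M' ⊑ M`
if and only if `M` and `M'` are isomorphic.  In particular, if `h : M → M'` and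
`h' : M' → M` are homomorphisms, then `h` is an isomorphism with inverse `h'`. -/
theorem mutual_subsumption_iff_iso {S : Signature} {M M' : Model S}
    (hM : M.Reach) (hM' : M'.Reach) :
    ((Subsumes M M' ∧ Subsumes M' M) ↔ Isomorphic M M') ∧
    (∀ (h : Hom M M') (h' : Hom M' M), h.IsInverse h') := by
  have inverse : ∀ (h : Hom M M') (h' : Hom M' M), h.IsInverse h' :=
    fun h h' => h.isInverse_of_reach h' hM hM'
  refine ⟨⟨?_, ?_⟩, inverse⟩
  · rintro ⟨⟨h⟩, ⟨h'⟩⟩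
    exact ⟨h, h', inverse h h'⟩
  · rintro ⟨σ, τ, -⟩
    exact ⟨⟨σ⟩, ⟨τ⟩⟩
end

section
/- Least upper bounds for subsumption are unique up to isomorphism: if M and M' are models and K and K' are both least upper bounds of {M, M'} with respect to the subsumption relation ⊑ (i.e. M ⊑ K, M' ⊑ K, and every K'' with M ⊑ K'' and M' ⊑ K'' satisfies K ⊑ K'', and likewise for K'), then K and K' are isomorphic. -/
/-- `K` is a least upper bound of `{M, M'}` with respect to subsumption `⊑`
(all models considered are assumed to satisfy the reachability constraint). -/
def IsLub {S : Signature} (M M' K : Model S) : Prop :=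
  Subsumes M K ∧ Subsumes M' K ∧
  ∀ K'' : Model S, K''.Reach → Subsumes M K'' → Subsumes M' K'' → Subsumes K K''

namespace Model

variable {S : Signature}

lemma Wrp.eq_of_mem {M : Model S} {W X : M.Wrp} {v : M.V} (hW : v ∈ W.val) (hX : v ∈ X.val) :
    W = X := by
  by_contra hne
  have hdisj := M.wr_disjoint _ W.property _ X.property (fun h => hne (Subtype.ext h))
  exact (Set.mem_empty_iff_false v).1 (hdisj ▸ ⟨hW, hX⟩)

end Model

namespace Hom

variable {S : Signature}

protected def id (M : Model S) : Hom M M where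
  hV := Sum.inl
  hW := id
  map_type _ v hv := ⟨v, rfl, hv⟩
  map_attr _ v v' hv := ⟨v, v', rfl, rfl, hv⟩
  map_rel _ f hf := ⟨f, fun _ => rfl, hf⟩
  map_name _ v hv := ⟨v, hv, rfl⟩
  map_wr _ v hv := ⟨v, rfl, hv⟩
  map_gN _ v hv := ⟨v, hv, rfl⟩
  map_gW _ _ h := h

variable {M₁ M₂ M₃ : Model S}

def comp (h₂ : Hom M₂ M₃) (h₁ : Hom M₁ M₂) : Hom M₁ M₃ where
  hV v := h₂.ext (h₁.hV v)
  hW W := h₂.hW (h₁.hW W)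
  map_type t v hv := by
    obtain ⟨u, hu, hut⟩ := h₁.map_type t v hv
    obtain ⟨w, hw, hwt⟩ := h₂.map_type t u hut
    exact ⟨w, by simp [hu, Hom.ext, hw], hwt⟩
  map_attr a v v' hv := by
    obtain ⟨u, u', hu, hu', hua⟩ := h₁.map_attr a v v' hv
    obtain ⟨w, w', hw, hw', hwa⟩ := h₂.map_attr a u u' hua
    exact ⟨w, w', by simp [hu, Hom.ext, hw], by simp [hu', Hom.ext, hw'], hwa⟩
  map_rel r f hf := by
    obtain ⟨f', hf', hf'r⟩ := h₁.map_rel r f hf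
    obtain ⟨f'', hf'', hf''r⟩ := h₂.map_rel r f' hf'r
    exact ⟨f'', fun i => by simp [hf' i, Hom.ext, hf'' i], hf''r⟩
  map_name b v hv := by
    obtain ⟨u, hu, hvu⟩ := h₁.map_name b v hv
    obtain ⟨w, hw, huw⟩ := h₂.map_name b u hu
    exact ⟨w, hw, by simp [hvu, Hom.ext, huw]⟩
  map_wr W v hv := by
    obtain ⟨u, hvu, hu⟩ := h₁.map_wr W v hv
    obtain ⟨w, huw, hw⟩ := h₂.map_wr (h₁.hW W) u hu
    exact ⟨w, by simp [hvu, Hom.ext, huw], hw⟩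
  map_gN x v hv := by
    obtain ⟨u, hu, hvu⟩ := h₁.map_gN x v hv
    obtain ⟨w, hw, huw⟩ := h₂.map_gN x u hu
    exact ⟨w, hw, by simp [hvu, Hom.ext, huw]⟩
  map_gW x W hx := h₂.map_gW x _ (h₁.map_gW x W hx)

@[simp]
lemma id_hV (M : Model S) (v : M.V) : (Hom.id M).hV v = Sum.inl v := rfl

@[simp]
lemma comp_hV (h₂ : Hom M₂ M₃) (h₁ : Hom M₁ M₂) (v : M₁.V) :
    (h₂.comp h₁).hV v = h₂.ext (h₁.hV v) := rfl

variable {M M' : Model S}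

lemma hV_eq_of_pathApply_s6 (h₁ h₂ : Hom M M') {p : List S.ATTR} {u v : M.V}
    (hp : M.pathApply p u = some v) (hu : h₁.hV u = h₂.hV u) : h₁.hV v = h₂.hV v := by
  induction p generalizing u with
  | nil =>
    obtain rfl : u = v := Option.some.inj hp
    exact hu
  | cons a p ih =>
    obtain ⟨w, hw, hp⟩ := Option.bind_eq_some_iff.1 hp
    obtain ⟨x₁, y₁, hx₁, hy₁, ha₁⟩ := h₁.map_attr a u w hw
    obtain ⟨x₂, y₂, hx₂, hy₂, ha₂⟩ := h₂.map_attr a u w hw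
    obtain rfl : x₁ = x₂ := Sum.inl.inj (hx₁.symm.trans (hu.trans hx₂))
    obtain rfl : y₁ = y₂ := Option.some.inj (ha₁.symm.trans ha₂)
    exact ih hp (hy₁.trans hy₂.symm)

lemma hV_eq_of_reach_s6 (hM : M.Reach) (h₁ h₂ : Hom M M') (v : M.V) : h₁.hV v = h₂.hV v := by
  obtain ⟨u, p, hroot, -, hp⟩ := hM v
  refine h₁.hV_eq_of_pathApply_s6 h₂ hp ?_
  rcases hroot with ⟨b, hb⟩ | ⟨x, hx⟩
  · obtain ⟨w₁, hw₁, hu₁⟩ := h₁.map_name b u hb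
    obtain ⟨w₂, hw₂, hu₂⟩ := h₂.map_name b u hb
    rw [hu₁, hu₂, Option.some.inj (hw₁.symm.trans hw₂)]
  · obtain ⟨w₁, hw₁, hu₁⟩ := h₁.map_gN x u hx
    obtain ⟨w₂, hw₂, hu₂⟩ := h₂.map_gN x u hx
    rw [hu₁, hu₂, Option.some.inj (hw₁.symm.trans hw₂)]

lemma hW_eq_of_reach (hM : M.Reach) (h₁ h₂ : Hom M M') (W : M.Wrp) : h₁.hW W = h₂.hW W := by
  obtain ⟨v, hv⟩ := M.wr_nonempty W.val W.property
  obtain ⟨u₁, hvu₁, hu₁⟩ := h₁.map_wr W v hv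
  obtain ⟨u₂, hvu₂, hu₂⟩ := h₂.map_wr W v hv
  obtain rfl : u₁ = u₂ := Sum.inl.inj (hvu₁.symm.trans ((h₁.hV_eq_of_reach_s6 hM h₂ v).trans hvu₂))
  exact Model.Wrp.eq_of_mem hu₁ hu₂

lemma exists_hV_eq_inl_of_reach (hM : M.Reach) (σ : Hom M M') (τ : Hom M' M) (v : M.V) :
    ∃ u, σ.hV v = Sum.inl u ∧ τ.hV u = Sum.inl v := by
  have hid := (τ.comp σ).hV_eq_of_reach_s6 hM (Hom.id M) v
  rw [comp_hV, id_hV] at hid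
  cases hσ : σ.hV v with
  | inl u => exact ⟨u, rfl, by simpa [hσ, Hom.ext] using hid⟩
  | inr W => simp [hσ, Hom.ext] at hid

lemma isInverse_of_reach_s6 (hM : M.Reach) (hM' : M'.Reach) (σ : Hom M M') (τ : Hom M' M) :
    σ.IsInverse τ :=
  ⟨σ.exists_hV_eq_inl_of_reach hM τ, τ.exists_hV_eq_inl_of_reach hM' σ,
    (τ.comp σ).hW_eq_of_reach hM (Hom.id M), (σ.comp τ).hW_eq_of_reach hM' (Hom.id M')⟩

end Hom

theorem lub_unique_general {S : Signature} {M M' K K' : Model S}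
    (hK : K.Reach) (hK' : K'.Reach)
    (h : IsLub M M' K) (h' : IsLub M M' K') :
    Isomorphic K K' := by
  obtain ⟨σ⟩ := h.2.2 K' hK' h'.1 h'.2.1
  obtain ⟨τ⟩ := h'.2.2 K hK h.1 h.2.1
  exact ⟨σ, τ, σ.isInverse_of_reach_s6 hK hK' τ⟩

/-- Least upper bounds for subsumption are unique up to
isomorphism: if `K` and `K'` are both least upper bounds of `{M, M'}` with respect
to `⊑`, then `K` and `K'` are isomorphic. -/
theorem lub_unique {S : Signature} {M M' K K' : Model S}
    (hM : M.Reach) (hM' : M'.Reach) (hK : K.Reach) (hK' : K'.Reach)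
    (h : IsLub M M' K) (h' : IsLub M M' K') :
    Isomorphic K K' :=
  lub_unique_general hK hK' h h'
end
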